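/- Let C ∈ (ℝ ∪ {−∞})^{n×n} be a regular matrix and let D ∈ (ℝ ∪ {−∞})^{n×n} satisfy Tr(D) ≤ 𝟙. Then the minimum of 𝟙ᵀ y ⊗ y⁻ 𝟙, where y = C x, over all regular vectors x ∈ ℝⁿ satisfying D x ≤ x equals Δ = (C D* (𝟙ᵀ C D*)⁻)⁻ 𝟙, and this minimum is attained at every vector x = α D* (𝟙ᵀ C D*)⁻ with α ∈ ℝ. -/

import Mathlib

/-!
Put `S = C D*` and `q = (𝟙ᵀ S)⁻`. When `Tr(D) ≤ 𝟙` every cycle of the digraph of `D` has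
nonpositive weight, so a walk of length `n`, which must repeat a vertex, weighs at most some
shorter walk: `Dⁿ ≤ D*`, hence `D D* ≤ D*`. Consequently `D* x = x` whenever `D x ≤ x`, so a
feasible `x` gives `y = C x = S x`, and `D (D* q) ≤ D* q`, so `α D* q` is feasible.

Since `q` normalizes the columns of `S`, `S_ij ≤ (S q)_i ⊗ (𝟙ᵀ S)_j`, so `y_i ≤ (S q)_i ⊗ 𝟙ᵀ y`,
i.e. `(S q)⁻ 𝟙 ≤ 𝟙ᵀ y ⊗ y⁻ 𝟙`. At `x = α D* q` we get `y = α S q` with `𝟙ᵀ S q = 𝟙`, and the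
span is exactly `(S q)⁻ 𝟙 = Δ`.
-/

open Finset

noncomputable section

namespace MaxPlus

/-- Max-plus multiplicative inverse: `-a` for real `a`, `⊥` for `⊥`. -/
def tinv (a : WithBot ℝ) : WithBot ℝ := WithBot.map (fun r => -r) a

/-- Max-plus rational power `a^(1/k) = a / k`. -/
def trt (a : WithBot ℝ) (k : ℕ) : WithBot ℝ := WithBot.map (fun r => r / (k : ℝ)) a

/-- A vector is regular if it has no `⊥` (= -∞) entries. -/
def Reg {n : ℕ} (x : Fin n → WithBot ℝ) : Prop := ∀ i, x i ≠ ⊥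

/-- `cdot q x = q⁻ x`, the max-plus product of the conjugate row vector `q⁻` with `x`. -/
def cdot {n : ℕ} (q x : Fin n → WithBot ℝ) : WithBot ℝ :=
  Finset.univ.sup fun i => tinv (q i) + x i

/-- Max-plus matrix-vector product. -/
def mulVec {m n : ℕ} (A : Matrix (Fin m) (Fin n) (WithBot ℝ)) (x : Fin n → WithBot ℝ) :
    Fin m → WithBot ℝ := fun i => Finset.univ.sup fun j => A i j + x j

/-- Max-plus matrix product. -/
def tmul {l m n : ℕ} (A : Matrix (Fin l) (Fin m) (WithBot ℝ))
    (B : Matrix (Fin m) (Fin n) (WithBot ℝ)) : Matrix (Fin l) (Fin n) (WithBot ℝ) :=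
  fun i j => Finset.univ.sup fun k => A i k + B k j

/-- Multiplicative conjugate transpose of a matrix. -/
def conjM {m n : ℕ} (A : Matrix (Fin m) (Fin n) (WithBot ℝ)) :
    Matrix (Fin n) (Fin m) (WithBot ℝ) := fun i j => tinv (A j i)

/-- Max-plus identity matrix. -/
def tId {n : ℕ} : Matrix (Fin n) (Fin n) (WithBot ℝ) := fun i j => if i = j then 0 else ⊥

/-- Max-plus matrix power. -/
def tpow {n : ℕ} (A : Matrix (Fin n) (Fin n) (WithBot ℝ)) : ℕ → Matrix (Fin n) (Fin n) (WithBot ℝ)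
  | 0 => tId
  | k + 1 => tmul A (tpow A k)

/-- Max-plus trace. -/
def ttr {n : ℕ} (A : Matrix (Fin n) (Fin n) (WithBot ℝ)) : WithBot ℝ :=
  Finset.univ.sup fun i => A i i

/-- `Tr(A) = tr A ⊕ tr A² ⊕ ⋯ ⊕ tr Aⁿ`. -/
def TrOp {n : ℕ} (A : Matrix (Fin n) (Fin n) (WithBot ℝ)) : WithBot ℝ :=
  (Finset.Icc 1 n).sup fun m => ttr (tpow A m)

/-- Kleene star `A* = I ⊕ A ⊕ ⋯ ⊕ A^(n-1)`. -/
def kstar {n : ℕ} (A : Matrix (Fin n) (Fin n) (WithBot ℝ)) : Matrix (Fin n) (Fin n) (WithBot ℝ) :=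
  fun i j => (Finset.range n).sup fun k => tpow A k i j

/-- Max-plus spectral radius `λ = ⊕_{m=1}^n (tr A^m)^(1/m)`. -/
def specRad {n : ℕ} (A : Matrix (Fin n) (Fin n) (WithBot ℝ)) : WithBot ℝ :=
  (Finset.Icc 1 n).sup fun m => trt (ttr (tpow A m)) m

/-- `prodAB A B [i₁, …, i_k] = A B^{i₁} A B^{i₂} ⋯ A B^{i_k}`. -/
def prodAB {n : ℕ} (A B : Matrix (Fin n) (Fin n) (WithBot ℝ)) :
    List ℕ → Matrix (Fin n) (Fin n) (WithBot ℝ)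
  | [] => tId
  | i :: t => tmul (tmul A (tpow B i)) (prodAB A B t)

/-- The all-ones (all-`𝟙 = 0`) vector. -/
def onesV (n : ℕ) : Fin n → WithBot ℝ := fun _ => 0

lemma add_finset_sup {ι α : Type*} [LinearOrder α] [AddCommMonoid α] [IsOrderedAddMonoid α]
    (a : WithBot α) (s : Finset ι) (f : ι → WithBot α) :
    a + s.sup f = s.sup fun i => a + f i :=
  Finset.apply_sup_eq_sup_comp_of_linearOrder (a + ·) (fun _ _ h => add_le_add_right h a)
    (WithBot.add_bot a)

lemma finset_sup_add {ι α : Type*} [LinearOrder α] [AddCommMonoid α] [IsOrderedAddMonoid α]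
    (a : WithBot α) (s : Finset ι) (f : ι → WithBot α) :
    s.sup f + a = s.sup fun i => f i + a := by
  simpa only [add_comm a] using add_finset_sup a s f

lemma tinv_coe (r : ℝ) : tinv (r : WithBot ℝ) = ((-r : ℝ) : WithBot ℝ) := rfl

lemma tinv_zero : tinv 0 = 0 := by
  simpa using tinv_coe 0

lemma tinv_ne_bot {a : WithBot ℝ} (ha : a ≠ ⊥) : tinv a ≠ ⊥ := by
  lift a to ℝ using ha
  exact WithBot.coe_ne_bot

lemma add_tinv_le_zero (a : WithBot ℝ) : a + tinv a ≤ 0 := by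
  induction a with
  | bot => exact bot_le
  | coe a => simp [tinv_coe, ← WithBot.coe_add]

lemma add_tinv_self {a : WithBot ℝ} (ha : a ≠ ⊥) : a + tinv a = 0 := by
  lift a to ℝ using ha
  simp [tinv_coe, ← WithBot.coe_add]

lemma le_add_tinv_add {a b : WithBot ℝ} (h : a ≤ b) : a ≤ a + tinv b + b := by
  induction b with
  | bot => simp [le_bot_iff.mp h]
  | coe b => rw [add_assoc, add_comm (tinv _), add_tinv_self WithBot.coe_ne_bot, add_zero]

lemma tinv_coe_add (r : ℝ) (a : WithBot ℝ) : tinv (r + a) = ((-r : ℝ) : WithBot ℝ) + tinv a := by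
  induction a with
  | bot => rfl
  | coe a => simp only [← WithBot.coe_add, tinv_coe, neg_add]

lemma tinv_le_add_tinv {a b c : WithBot ℝ} (ha : a ≠ ⊥) (h : a ≤ b + c) :
    tinv b ≤ c + tinv a := by
  lift a to ℝ using ha
  induction b with
  | bot => exact bot_le
  | coe b =>
    induction c with
    | bot => simp at h
    | coe c =>
      simp only [tinv_coe, ← WithBot.coe_add, WithBot.coe_le_coe] at h ⊢
      linarith

lemma cdot_onesV_left {m : ℕ} (y : Fin m → WithBot ℝ) :
    cdot (onesV m) y = Finset.univ.sup y := by
  simp [cdot, onesV, tinv_zero]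

lemma le_cdot_onesV_left {m : ℕ} (y : Fin m → WithBot ℝ) (i : Fin m) : y i ≤ cdot (onesV m) y :=
  (cdot_onesV_left y).symm ▸ Finset.le_sup (Finset.mem_univ i)

lemma cdot_onesV_right {m : ℕ} (y : Fin m → WithBot ℝ) :
    cdot y (onesV m) = Finset.univ.sup fun i => tinv (y i) := by
  simp [cdot, onesV]

section mulVec

variable {l m n : ℕ}

lemma add_le_mulVec (A : Matrix (Fin m) (Fin n) (WithBot ℝ)) (x : Fin n → WithBot ℝ) (i : Fin m)
    (j : Fin n) : A i j + x j ≤ mulVec A x i :=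
  Finset.le_sup (f := fun j => A i j + x j) (Finset.mem_univ j)

lemma add_le_tmul (A : Matrix (Fin l) (Fin m) (WithBot ℝ)) (B : Matrix (Fin m) (Fin n) (WithBot ℝ))
    (i : Fin l) (k : Fin m) (j : Fin n) : A i k + B k j ≤ tmul A B i j :=
  Finset.le_sup (f := fun k => A i k + B k j) (Finset.mem_univ k)

lemma mulVec_tmul (A : Matrix (Fin l) (Fin m) (WithBot ℝ)) (B : Matrix (Fin m) (Fin n) (WithBot ℝ))
    (x : Fin n → WithBot ℝ) : mulVec (tmul A B) x = mulVec A (mulVec B x) := by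
  funext i
  simp only [mulVec, tmul, finset_sup_add, add_finset_sup, add_assoc]
  exact Finset.sup_comm _ _ _

lemma mulVec_mono (A : Matrix (Fin m) (Fin n) (WithBot ℝ)) {x y : Fin n → WithBot ℝ}
    (h : ∀ j, x j ≤ y j) (i : Fin m) : mulVec A x i ≤ mulVec A y i :=
  Finset.sup_mono_fun fun j _ => add_le_add_right (h j) _

lemma mulVec_mono_left {A B : Matrix (Fin m) (Fin n) (WithBot ℝ)} (h : ∀ i j, A i j ≤ B i j)
    (x : Fin n → WithBot ℝ) (i : Fin m) : mulVec A x i ≤ mulVec B x i :=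
  Finset.sup_mono_fun fun j _ => add_le_add_left (h i j) _

lemma mulVec_const_add (A : Matrix (Fin m) (Fin n) (WithBot ℝ)) (a : WithBot ℝ)
    (x : Fin n → WithBot ℝ) : mulVec A (fun j => a + x j) = fun i => a + mulVec A x i := by
  funext i
  simp only [mulVec, add_finset_sup, add_left_comm a]

lemma mulVec_tId (x : Fin n → WithBot ℝ) : mulVec tId x = x := by
  funext i
  refine le_antisymm (Finset.sup_le fun j _ => ?_) ?_
  · by_cases hij : i = j <;> simp [tId, hij]
  · calc x i = tId i i + x i := by simp [tId]
      _ ≤ mulVec tId x i := add_le_mulVec _ _ i i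

lemma reg_mulVec {A : Matrix (Fin m) (Fin n) (WithBot ℝ)} (hA : ∀ i, ∃ j, A i j ≠ ⊥)
    {x : Fin n → WithBot ℝ} (hx : Reg x) : Reg (mulVec A x) := fun i =>
  have ⟨j, hj⟩ := hA i
  ne_bot_of_le_ne_bot (WithBot.add_ne_bot.mpr ⟨hj, hx j⟩) (add_le_mulVec A x i j)

end mulVec

section kstar

variable {n : ℕ} (D : Matrix (Fin n) (Fin n) (WithBot ℝ))

lemma tpow_add_le (a b : ℕ) (i k j : Fin n) :
    tpow D a i k + tpow D b k j ≤ tpow D (a + b) i j := by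
  induction a generalizing i with
  | zero => by_cases hik : i = k <;> simp [tpow, tId, hik]
  | succ a ih =>
    rw [Nat.succ_add]
    simp only [tpow, tmul, finset_sup_add]
    refine Finset.sup_le fun l _ => ?_
    calc D i l + tpow D a l k + tpow D b k j ≤ D i l + tpow D (a + b) l j := by
          rw [add_assoc]; exact add_le_add_right (ih l) _
      _ ≤ _ := add_le_tmul D (tpow D (a + b)) i l j

def pathWeight (p : ℕ → Fin n) (k : ℕ) : WithBot ℝ :=
  ∑ t ∈ Finset.range k, D (p t) (p (t + 1))

lemma pathWeight_add (p : ℕ → Fin n) (a b : ℕ) :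
    pathWeight D p (a + b) = pathWeight D p a + pathWeight D (fun t => p (a + t)) b := by
  simp only [pathWeight, Finset.sum_range_add, add_assoc]

lemma pathWeight_succ (p : ℕ → Fin n) (k : ℕ) :
    pathWeight D p (k + 1) = D (p 0) (p 1) + pathWeight D (fun t => p (t + 1)) k := by
  rw [pathWeight, Finset.sum_range_succ', add_comm]
  rfl

lemma pathWeight_le_tpow (k : ℕ) (p : ℕ → Fin n) : pathWeight D p k ≤ tpow D k (p 0) (p k) := by
  induction k generalizing p with
  | zero => simp [pathWeight, tpow, tId]
  | succ k ih =>
    rw [pathWeight_succ]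
    calc D (p 0) (p 1) + pathWeight D (fun t => p (t + 1)) k
        ≤ D (p 0) (p 1) + tpow D k (p 1) (p (k + 1)) := add_le_add_right (ih _) _
      _ ≤ tpow D (k + 1) (p 0) (p (k + 1)) := add_le_tmul D (tpow D k) _ _ _

lemma exists_pathWeight_eq_tpow (k : ℕ) (i j : Fin n) (h : tpow D k i j ≠ ⊥) :
    ∃ p : ℕ → Fin n, p 0 = i ∧ p k = j ∧ tpow D k i j = pathWeight D p k := by
  induction k generalizing i with
  | zero =>
    have hij : i = j := by by_contra hij; simp [tpow, tId, hij] at h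
    exact ⟨fun _ => i, rfl, hij, by simp [tpow, tId, hij, pathWeight]⟩
  | succ k ih =>
    obtain ⟨l, -, hl⟩ := Finset.exists_mem_eq_sup Finset.univ ⟨i, Finset.mem_univ i⟩
      fun l => D i l + tpow D k l j
    have hl' : tpow D (k + 1) i j = D i l + tpow D k l j := hl
    obtain ⟨p, hp0, hpk, hp⟩ := ih l (WithBot.add_ne_bot.mp (hl' ▸ h)).2
    refine ⟨fun t => Nat.casesOn t i p, rfl, hpk, ?_⟩
    rw [hl', hp, pathWeight_succ, ← hp0]
    rfl

lemma tpow_diag_le_TrOp {m : ℕ} (hm1 : 1 ≤ m) (hmn : m ≤ n) (k : Fin n) :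
    tpow D m k k ≤ TrOp D :=
  calc tpow D m k k ≤ ttr (tpow D m) := Finset.le_sup (f := fun i => tpow D m i i) (Finset.mem_univ k)
    _ ≤ TrOp D := Finset.le_sup (f := fun m => ttr (tpow D m)) (Finset.mem_Icc.mpr ⟨hm1, hmn⟩)

variable {D}

lemma pathWeight_le_kstar_of_repeat (hD : TrOp D ≤ 0) (p : ℕ → Fin n) {s m r : ℕ}
    (hm : 1 ≤ m) (hlen : s + m + r ≤ n) (hrep : p (s + m) = p s) :
    pathWeight D p (s + m + r) ≤ kstar D (p 0) (p (s + m + r)) := by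
  have hcycle : pathWeight D (fun u => p (s + u)) m ≤ 0 :=
    calc _ ≤ tpow D m (p s) (p s) := by
          simpa [hrep] using pathWeight_le_tpow D m fun u => p (s + u)
      _ ≤ 0 := (tpow_diag_le_TrOp D hm (by omega) (p s)).trans hD
  have hrest : pathWeight D (fun u => p (s + m + u)) r ≤ tpow D r (p s) (p (s + m + r)) := by
    simpa [hrep] using pathWeight_le_tpow D r fun u => p (s + m + u)
  calc pathWeight D p (s + m + r)
      = pathWeight D p s + pathWeight D (fun u => p (s + u)) m
          + pathWeight D (fun u => p (s + m + u)) r := by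
        simp only [pathWeight_add, add_assoc]
    _ ≤ tpow D s (p 0) (p s) + 0 + tpow D r (p s) (p (s + m + r)) :=
        add_le_add (add_le_add (pathWeight_le_tpow D s p) hcycle) hrest
    _ ≤ tpow D (s + r) (p 0) (p (s + m + r)) := by rw [add_zero]; exact tpow_add_le D _ _ _ _ _
    _ ≤ kstar D (p 0) (p (s + m + r)) :=
        Finset.le_sup (f := fun k => tpow D k (p 0) _) (Finset.mem_range.mpr (by omega))

lemma tpow_card_le_kstar (hD : TrOp D ≤ 0) (i j : Fin n) : tpow D n i j ≤ kstar D i j := by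
  by_cases h : tpow D n i j = ⊥
  · exact h ▸ bot_le
  obtain ⟨p, rfl, rfl, hp⟩ := exists_pathWeight_eq_tpow D n i j h
  have hrepeat : ∀ s t : ℕ, s < t → t ≤ n → p t = p s → pathWeight D p n ≤ kstar D (p 0) (p n) := by
    intro s t hst htn hrep
    have := pathWeight_le_kstar_of_repeat hD p (s := s) (m := t - s) (r := n - t) (by omega)
      (by omega) (by rwa [Nat.add_sub_cancel' hst.le])
    rwa [show s + (t - s) + (n - t) = n by omega] at this
  obtain ⟨a, b, hab, hrep⟩ :=
    Fintype.exists_ne_map_eq_of_card_lt (fun a : Fin (n + 1) => p a) (by simp)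
  rw [hp]
  rcases lt_or_gt_of_ne (Fin.val_injective.ne hab) with hlt | hlt
  · exact hrepeat a b hlt b.is_le hrep.symm
  · exact hrepeat b a hlt a.is_le hrep

lemma tmul_kstar_le (hD : TrOp D ≤ 0) (i j : Fin n) : tmul D (kstar D) i j ≤ kstar D i j := by
  refine Finset.sup_le fun l _ => ?_
  simp only [kstar, add_finset_sup]
  refine Finset.sup_le fun k hk => ?_
  have hk : k + 1 ≤ n := Finset.mem_range.mp hk
  calc D i l + tpow D k l j ≤ tpow D (k + 1) i j := add_le_tmul D (tpow D k) i l j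
    _ ≤ kstar D i j := by
        rcases hk.lt_or_eq with hlt | heq
        · exact Finset.le_sup (f := fun k => tpow D k i j) (Finset.mem_range.mpr hlt)
        · exact heq ▸ tpow_card_le_kstar hD i j

lemma mulVec_mulVec_kstar_le (hD : TrOp D ≤ 0) (x : Fin n → WithBot ℝ) (i : Fin n) :
    mulVec D (mulVec (kstar D) x) i ≤ mulVec (kstar D) x i := by
  rw [← mulVec_tmul]
  exact mulVec_mono_left (tmul_kstar_le hD) x i

lemma zero_le_kstar_diag (i : Fin n) : 0 ≤ kstar D i i :=
  calc (0 : WithBot ℝ) = tpow D 0 i i := by simp [tpow, tId]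
    _ ≤ kstar D i i := Finset.le_sup (f := fun k => tpow D k i i) (Finset.mem_range.mpr i.pos)

lemma le_mulVec_kstar (x : Fin n → WithBot ℝ) (i : Fin n) : x i ≤ mulVec (kstar D) x i :=
  calc x i = 0 + x i := (zero_add _).symm
    _ ≤ kstar D i i + x i := add_le_add_left (zero_le_kstar_diag i) _
    _ ≤ mulVec (kstar D) x i := add_le_mulVec _ x i i

lemma le_tmul_kstar {m : ℕ} (C : Matrix (Fin m) (Fin n) (WithBot ℝ)) (i : Fin m) (j : Fin n) :
    C i j ≤ tmul C (kstar D) i j :=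
  calc C i j = C i j + 0 := (add_zero _).symm
    _ ≤ C i j + kstar D j j := add_le_add_right (zero_le_kstar_diag j) _
    _ ≤ tmul C (kstar D) i j := add_le_tmul C (kstar D) i j j

lemma mulVec_tpow_le {x : Fin n → WithBot ℝ} (hx : ∀ i, mulVec D x i ≤ x i) (k : ℕ) (i : Fin n) :
    mulVec (tpow D k) x i ≤ x i := by
  induction k generalizing i with
  | zero => rw [tpow, mulVec_tId]
  | succ k ih =>
    rw [tpow, mulVec_tmul]
    exact (mulVec_mono D ih i).trans (hx i)

lemma mulVec_kstar_of_le {x : Fin n → WithBot ℝ} (hx : ∀ i, mulVec D x i ≤ x i) :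
    mulVec (kstar D) x = x := by
  funext i
  refine le_antisymm (Finset.sup_le fun j _ => ?_) (le_mulVec_kstar x i)
  simp only [kstar, finset_sup_add]
  exact Finset.sup_le fun k _ => (add_le_mulVec _ x i j).trans (mulVec_tpow_le hx k i)

end kstar

section span

variable {m n : ℕ}

/-- `𝟙ᵀ y ⊗ y⁻ 𝟙`, which is `max y - min y` for regular `y`; `⊥` entries are skipped by `y⁻`. -/
def spanSeminorm (y : Fin m → WithBot ℝ) : WithBot ℝ := cdot (onesV m) y + cdot y (onesV m)

/-- `(𝟙ᵀ B)⁻`: the negated column maxima of `B`. -/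
def colNorm (B : Matrix (Fin m) (Fin n) (WithBot ℝ)) : Fin n → WithBot ℝ :=
  fun j => tinv (cdot (onesV m) fun i => B i j)

lemma reg_colNorm {B : Matrix (Fin m) (Fin n) (WithBot ℝ)} (hB : ∀ j, ∃ i, B i j ≠ ⊥) :
    Reg (colNorm B) := fun j =>
  have ⟨i, hi⟩ := hB j
  tinv_ne_bot <| ne_bot_of_le_ne_bot hi <| le_cdot_onesV_left (fun i => B i j) i

lemma spanSeminorm_const_add (α : ℝ) (y : Fin m → WithBot ℝ) :
    spanSeminorm (fun i => (α : WithBot ℝ) + y i) = spanSeminorm y := by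
  simp only [spanSeminorm, cdot_onesV_left, cdot_onesV_right, tinv_coe_add, ← add_finset_sup]
  rw [add_add_add_comm, ← WithBot.coe_add, add_neg_cancel, WithBot.coe_zero, zero_add]

lemma mulVec_colNorm_le_zero (B : Matrix (Fin m) (Fin n) (WithBot ℝ)) (i : Fin m) :
    mulVec B (colNorm B) i ≤ 0 :=
  Finset.sup_le fun j _ => calc
    B i j + colNorm B j ≤ (cdot (onesV m) fun i => B i j) + colNorm B j :=
        add_le_add_left (le_cdot_onesV_left (fun i => B i j) i) _
    _ ≤ 0 := add_tinv_le_zero _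

lemma spanSeminorm_mulVec_colNorm {B : Matrix (Fin m) (Fin n) (WithBot ℝ)}
    (hB : ∀ j, ∃ i, B i j ≠ ⊥) :
    spanSeminorm (mulVec B (colNorm B)) = cdot (mulVec B (colNorm B)) (onesV m) := by
  rcases n.eq_zero_or_pos with rfl | hn
  · simp [spanSeminorm, cdot, mulVec, tinv]
  obtain ⟨i₀, hi₀⟩ := hB ⟨0, hn⟩
  obtain ⟨i, -, hi⟩ := Finset.exists_mem_eq_sup Finset.univ ⟨i₀, Finset.mem_univ _⟩
    fun i => B i ⟨0, hn⟩
  have hne : B i ⟨0, hn⟩ ≠ ⊥ :=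
    ne_bot_of_le_ne_bot hi₀ (hi ▸ Finset.le_sup (f := fun i => B i ⟨0, hn⟩) (Finset.mem_univ i₀))
  have hmax : cdot (onesV m) (mulVec B (colNorm B)) = 0 := by
    rw [cdot_onesV_left]
    refine le_antisymm (Finset.sup_le fun i _ => mulVec_colNorm_le_zero B i) ?_
    calc (0 : WithBot ℝ) = B i ⟨0, hn⟩ + colNorm B ⟨0, hn⟩ := by
          rw [colNorm, cdot_onesV_left, hi, add_tinv_self hne]
      _ ≤ mulVec B (colNorm B) i := add_le_mulVec B _ i _
      _ ≤ _ := Finset.le_sup (Finset.mem_univ i)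
  rw [spanSeminorm, hmax, zero_add]

lemma cdot_mulVec_colNorm_le_spanSeminorm (B : Matrix (Fin m) (Fin n) (WithBot ℝ))
    {x : Fin n → WithBot ℝ} (hy : Reg (mulVec B x)) :
    cdot (mulVec B (colNorm B)) (onesV m) ≤ spanSeminorm (mulVec B x) := by
  set y := mulVec B x
  have hcol : ∀ j, (cdot (onesV m) fun i => B i j) + x j ≤ cdot (onesV m) y := fun j => by
    simp only [cdot_onesV_left, finset_sup_add]
    exact Finset.sup_mono_fun fun i _ => add_le_mulVec B x i j
  have hrow : ∀ i, y i ≤ mulVec B (colNorm B) i + cdot (onesV m) y := fun i =>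
    Finset.sup_le fun j _ => calc
      B i j + x j ≤ B i j + colNorm B j + (cdot (onesV m) fun i => B i j) + x j :=
          add_le_add_left (le_add_tinv_add (le_cdot_onesV_left (fun i => B i j) i)) _
      _ ≤ mulVec B (colNorm B) i + cdot (onesV m) y := by
          rw [add_assoc]
          exact add_le_add (add_le_mulVec B _ i j) (hcol j)
  rw [spanSeminorm, cdot_onesV_right, cdot_onesV_right]
  exact Finset.sup_le fun i _ => (tinv_le_add_tinv (hy i) (hrow i)).trans
    (add_le_add_right (Finset.le_sup (f := fun i => tinv (y i)) (Finset.mem_univ i)) _)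

end span

end MaxPlus

open MaxPlus

/-- minimization of the span seminorm of `y = C x` subject to `D x ≤ x`. -/
theorem stmt_7 {n : ℕ} (C D : Matrix (Fin n) (Fin n) (WithBot ℝ))
    (hC : (∀ i, ∃ j, C i j ≠ ⊥) ∧ (∀ j, ∃ i, C i j ≠ ⊥))
    (hD : TrOp D ≤ 0)
    (Δ : WithBot ℝ)
    (hΔ : Δ = cdot (mulVec (tmul C (kstar D))
        (fun j => tinv (cdot (onesV n) (fun i => tmul C (kstar D) i j)))) (onesV n)) :
    (∀ x : Fin n → WithBot ℝ, Reg x → (∀ i, mulVec D x i ≤ x i) →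
        Δ ≤ cdot (onesV n) (mulVec C x) + cdot (mulVec C x) (onesV n)) ∧
      ∀ α : ℝ,
        Reg (fun j => (α : WithBot ℝ) + mulVec (kstar D)
            (fun r => tinv (cdot (onesV n) (fun i => tmul C (kstar D) i r))) j) ∧
        (∀ i, mulVec D (fun j => (α : WithBot ℝ) + mulVec (kstar D)
              (fun r => tinv (cdot (onesV n) (fun i' => tmul C (kstar D) i' r))) j) i
            ≤ (α : WithBot ℝ) + mulVec (kstar D)
              (fun r => tinv (cdot (onesV n) (fun i' => tmul C (kstar D) i' r))) i) ∧
        cdot (onesV n) (mulVec C (fun j => (α : WithBot ℝ) + mulVec (kstar D)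
              (fun r => tinv (cdot (onesV n) (fun i => tmul C (kstar D) i r))) j))
            + cdot (mulVec C (fun j => (α : WithBot ℝ) + mulVec (kstar D)
              (fun r => tinv (cdot (onesV n) (fun i => tmul C (kstar D) i r))) j)) (onesV n)
          = Δ := by
  subst hΔ
  set S := tmul C (kstar D)
  have hScol : ∀ j, ∃ i, S i j ≠ ⊥ := fun j =>
    (hC.2 j).imp fun i hi => ne_bot_of_le_ne_bot hi (le_tmul_kstar C i j)
  refine ⟨fun x hx hDx => ?_, fun α => ⟨fun j => ?_, fun i => ?_, ?_⟩⟩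
  · have hCx : mulVec C x = mulVec S x := by rw [mulVec_tmul, mulVec_kstar_of_le hDx]
    rw [hCx]
    exact cdot_mulVec_colNorm_le_spanSeminorm S (hCx ▸ reg_mulVec hC.1 hx)
  · exact WithBot.add_ne_bot.mpr ⟨WithBot.coe_ne_bot,
      ne_bot_of_le_ne_bot (reg_colNorm hScol j) (le_mulVec_kstar _ j)⟩
  · rw [mulVec_const_add]
    exact add_le_add_right (mulVec_mulVec_kstar_le hD _ i) _
  · have hCx : mulVec C (fun j => ↑α + mulVec (kstar D) (colNorm S) j)
        = fun i => ↑α + mulVec S (colNorm S) i := by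
      rw [mulVec_const_add, mulVec_tmul]
    exact (congrArg spanSeminorm hCx).trans
      ((spanSeminorm_const_add α _).trans (spanSeminorm_mulVec_colNorm hScol))
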